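/- arXiv:2311.02813 — 6 statements merged into one kernel-verified Lean document; each statement's English description precedes it below -/
import Mathlib

section
/- Under the PD payoff assumptions, for all x, y > 0 with Δ_θ ≤ x/(x+y) < Δ_τ, we have F_θ(x,y) < F_τ(x,y), where F_θ(x,y) = (x/(x+y))π(C,C) + (y/(x+y))((1/2)π(C,D) + (1/2)π(D,D)) and F_τ(x,y) = (x/(x+y))((1/2)π(D,D) + (1/2)π(D,C)) + (y/(x+y))π(D,D). -/
/-!
With `p = x / (x + y)` the share of the first type, twice the gap `F_τ - F_θ` equals
`(πDD - πCD) - p (πCC - πCD) + p (πDC - πCC)`. The upper bound `p < Δ_τ` makes the first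
difference positive, and `πDC > πCC` makes the last term positive.
-/

theorem payoff_cooperate_lt_payoff_defect {πDC πCC πDD πCD p : ℝ} (hp : 0 < p)
    (hDC : πCC < πDC) (hshare : p * (πCC - πCD) < πDD - πCD) :
    p * πCC + (1 - p) * ((1/2) * πCD + (1/2) * πDD) <
      p * ((1/2) * πDD + (1/2) * πDC) + (1 - p) * πDD := by
  have htemptation : 0 < p * (πDC - πCC) := mul_pos hp (sub_pos.mpr hDC)
  linear_combination (1/2) * hshare + (1/2) * htemptation

theorem stmt3_general (πDC πCC πDD πCD α : ℝ)
    (h1 : πDC > πCC) (h2 : πCC > πDD) (h3 : πDD > πCD) :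
    ∀ x y : ℝ, 0 < x → 0 < y →
      (πDD - πCD) / (πCC + α - πCD) ≤ x / (x + y) →
      x / (x + y) < (πDD - πCD) / (πCC - πCD) →
      (x / (x + y)) * πCC + (y / (x + y)) * ((1/2) * πCD + (1/2) * πDD) <
      (x / (x + y)) * ((1/2) * πDD + (1/2) * πDC) + (y / (x + y)) * πDD := by
  intro x y hx hy _ hlt
  have hsum : 0 < x + y := add_pos hx hy
  have hshare_y : y / (x + y) = 1 - x / (x + y) := by field_simp; ring
  have hgap : 0 < πCC - πCD := by linarith
  rw [hshare_y]
  exact payoff_cooperate_lt_payoff_defect (div_pos hx hsum) h1 ((lt_div_iff₀ hgap).mp hlt)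

theorem stmt3 (πDC πCC πDD πCD α : ℝ)
    (h1 : πDC > πCC) (h2 : πCC > πDD) (h3 : πDD > πCD)
    (hα : α > πDC - πCC) :
    ∀ x y : ℝ, 0 < x → 0 < y →
      (πDD - πCD) / (πCC + α - πCD) ≤ x / (x + y) →
      x / (x + y) < (πDD - πCD) / (πCC - πCD) →
      (x / (x + y)) * πCC + (y / (x + y)) * ((1/2) * πCD + (1/2) * πDD) <
      (x / (x + y)) * ((1/2) * πDD + (1/2) * πDC) + (y / (x + y)) * πDD :=
  stmt3_general πDC πCC πDD πCD α h1 h2 h3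
end

section
/- Under the PD payoff assumptions, for x, y > 0 with x/(x+y) < Δ_θ the no-screening social welfare is W(x,y,0) = (x+y)π(D,D), while the screening welfare W(x,y,1) = x(π(C,C)+α) + y·π(D,D) is strictly larger: W(x,y,1) > W(x,y,0). -/
theorem stmt7 (πDC πCC πDD πCD α : ℝ)
    (h1 : πDC > πCC) (h2 : πCC > πDD) (h3 : πDD > πCD)
    (hα : α > πDC - πCC) :
    ∀ x y : ℝ, 0 < x → 0 < y →
      x / (x + y) < (πDD - πCD) / (πCC + α - πCD) →
      x * (πCC + α) + y * πDD > (x + y) * πDD := by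
  intro x y hx hy _
  nlinarith [mul_pos hx (show (0:ℝ) < πCC + α - πDD by linarith)]
end

section
/- Under the PD payoff assumptions with α > π(D,C) - π(C,C), for x, y > 0 the welfare difference when Δ_θ ≤ x/(x+y) < Δ_τ equals W(x,y,1) - W(x,y,0) = (xy/(x+y))·((π(C,C)+α) - (1/2)π(C,D) - (1/2)π(D,C)), and this quantity is strictly positive. -/
theorem stmt8 (πDC πCC πDD πCD α : ℝ)
    (h1 : πDC > πCC) (h2 : πCC > πDD) (h3 : πDD > πCD)
    (hα : α > πDC - πCC) :
    ∀ x y : ℝ, 0 < x → 0 < y →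
      (πDD - πCD) / (πCC + α - πCD) ≤ x / (x + y) →
      x / (x + y) < (πDD - πCD) / (πCC - πCD) →
      (x * (πCC + α) + y * πDD) -
        (x * ((x / (x + y)) * (πCC + α) + (y / (x + y)) * ((1/2) * πCD + (1/2) * πDD)) +
         y * ((x / (x + y)) * ((1/2) * πDD + (1/2) * πDC) + (y / (x + y)) * πDD)) =
        (x * y / (x + y)) * ((πCC + α) - (1/2) * πCD - (1/2) * πDC) ∧
      0 < (x * y / (x + y)) * ((πCC + α) - (1/2) * πCD - (1/2) * πDC) := by
  intro x y hx hy _ _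
  have hxy : x + y ≠ 0 := by positivity
  constructor
  · field_simp
    ring
  · have h : 0 < (πCC + α) - (1/2) * πCD - (1/2) * πDC := by linarith
    positivity
end

section
/- Under the PD payoff assumptions with α > π(D,C) - π(C,C), for x, y > 0 the welfare difference when x/(x+y) ≥ Δ_τ equals W(x,y,1) - W(x,y,0) = y·((x/(x+y))·(α/2) + π(D,D) - (1/2)(π(C,D)+π(D,C))); consequently it is strictly positive if and only if x/(x+y) > Δ_W := (π(C,D)+π(D,C)-2π(D,D))/α. -/
theorem stmt9 (πDC πCC πDD πCD α : ℝ)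
    (h1 : πDC > πCC) (h2 : πCC > πDD) (h3 : πDD > πCD)
    (hα : α > πDC - πCC) :
    ∀ x y : ℝ, 0 < x → 0 < y →
      x / (x + y) ≥ (πDD - πCD) / (πCC - πCD) →
      (x * (πCC + α) + y * πDD) -
        (x * ((x / (x + y)) * (πCC + α) +
              (y / (x + y)) * ((1/2) * πCD + (1/2) * (πCC + α))) +
         y * ((x / (x + y)) * ((1/2) * πCC + (1/2) * πDC) +
              (y / (x + y)) * ((1/2) * πCD + (1/2) * πDC))) =
        y * ((x / (x + y)) * (α / 2) + πDD - (1/2) * (πCD + πDC)) ∧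
      (0 < y * ((x / (x + y)) * (α / 2) + πDD - (1/2) * (πCD + πDC)) ↔
        x / (x + y) > (πCD + πDC - 2 * πDD) / α) := by
  intro x y hx hy _
  have hxy : 0 < x + y := by linarith
  have hα0 : 0 < α := by linarith
  constructor
  · field_simp
    ring
  · constructor
    · intro h
      have h2 : 0 < (x / (x + y)) * (α / 2) + πDD - (1/2) * (πCD + πDC) := by
        by_contra hc
        push_neg at hc
        nlinarith
      rw [gt_iff_lt, div_lt_div_iff₀ hα0 hxy]
      have h4 := mul_pos h2 hxy
      field_simp at h4
      nlinarith
    · intro h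
      rw [gt_iff_lt, div_lt_div_iff₀ hα0 hxy] at h
      have : 0 < (x / (x + y)) * (α / 2) + πDD - (1/2) * (πCD + πDC) := by
        rw [div_mul_eq_mul_div, sub_pos, ← sub_lt_iff_lt_add, lt_div_iff₀ hxy]
        nlinarith
      positivity
end

section
/- Under the PD payoff assumptions, with screening fee δ = (1/2)π(C,C) + (1/2)π(D,C) - π(D,D) and inheritance discount p ∈ [0,1], the material payoff difference under screening F_θ - F_τ = π(C,C) - δ(1-p) - π(D,D) is strictly positive if p > Δ_p, strictly negative if p < Δ_p, and zero if p = Δ_p, where Δ_p = (π(D,C) - π(C,C))/(π(C,C) + π(D,C) - 2π(D,D)). -/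
lemma screening_gap_eq_mul_sub (πDC πCC πDD p : ℝ) (hA : πCC + πDC - 2 * πDD ≠ 0) :
    πCC - ((1/2) * πCC + (1/2) * πDC - πDD) * (1 - p) - πDD
      = (πCC + πDC - 2 * πDD) / 2 * (p - (πDC - πCC) / (πCC + πDC - 2 * πDD)) := by
  field_simp
  ring

theorem stmt10_general (πDC πCC πDD : ℝ)
    (h1 : πDC > πCC) (h2 : πCC > πDD) :
    ∀ p : ℝ, 0 ≤ p → p ≤ 1 →
      (p > (πDC - πCC) / (πCC + πDC - 2 * πDD) →
        0 < πCC - ((1/2) * πCC + (1/2) * πDC - πDD) * (1 - p) - πDD) ∧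
      (p < (πDC - πCC) / (πCC + πDC - 2 * πDD) →
        πCC - ((1/2) * πCC + (1/2) * πDC - πDD) * (1 - p) - πDD < 0) ∧
      (p = (πDC - πCC) / (πCC + πDC - 2 * πDD) →
        πCC - ((1/2) * πCC + (1/2) * πDC - πDD) * (1 - p) - πDD = 0) := by
  intro p _ _
  have hA : 0 < πCC + πDC - 2 * πDD := by linarith
  have hA_half : 0 < (πCC + πDC - 2 * πDD) / 2 := half_pos hA
  rw [screening_gap_eq_mul_sub πDC πCC πDD p hA.ne']
  exact ⟨fun hp => mul_pos hA_half (sub_pos.2 hp),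
    fun hp => mul_neg_of_pos_of_neg hA_half (sub_neg.2 hp),
    fun hp => by rw [hp, sub_self, mul_zero]⟩

theorem stmt10 (πDC πCC πDD πCD : ℝ)
    (h1 : πDC > πCC) (h2 : πCC > πDD) (h3 : πDD > πCD) :
    ∀ p : ℝ, 0 ≤ p → p ≤ 1 →
      (p > (πDC - πCC) / (πCC + πDC - 2 * πDD) →
        0 < πCC - ((1/2) * πCC + (1/2) * πDC - πDD) * (1 - p) - πDD) ∧
      (p < (πDC - πCC) / (πCC + πDC - 2 * πDD) →
        πCC - ((1/2) * πCC + (1/2) * πDC - πDD) * (1 - p) - πDD < 0) ∧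
      (p = (πDC - πCC) / (πCC + πDC - 2 * πDD) →
        πCC - ((1/2) * πCC + (1/2) * πDC - πDD) * (1 - p) - πDD = 0) :=
  stmt10_general πDC πCC πDD h1 h2
end

section
/- Under the PD payoff assumptions with α > π(D,C) - π(C,C) and π(C,D) + π(D,C) - 2π(D,D) > 0, if p > Δ_p and Δ_W ≤ Δ_τ, then for all x, y > 0 (with screening always active) F_θ(x,y) - F_τ(x,y) = π(C,C) - δ(1-p) - π(D,D) > 0, where δ = (1/2)π(C,C) + (1/2)π(D,C) - π(D,D) and Δ_p = (π(D,C)-π(C,C))/(π(C,C)+π(D,C)-2π(D,D)). -/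
theorem stmt18 (πDC πCC πDD πCD α p : ℝ)
    (h1 : πDC > πCC) (h2 : πCC > πDD) (h3 : πDD > πCD)
    (hα : α > πDC - πCC) (hsum : πCD + πDC - 2 * πDD > 0)
    (hp0 : 0 ≤ p) (hp1 : p ≤ 1)
    (hp : p > (πDC - πCC) / (πCC + πDC - 2 * πDD))
    (hW : (πCD + πDC - 2 * πDD) / α ≤ (πDD - πCD) / (πCC - πCD)) :
    ∀ x y : ℝ, 0 < x → 0 < y →
      0 < πCC - ((1/2) * πCC + (1/2) * πDC - πDD) * (1 - p) - πDD := by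
  intro x y hx hy
  have hD : 0 < πCC + πDC - 2 * πDD := by linarith
  have hp' : (πDC - πCC) < p * (πCC + πDC - 2 * πDD) := by
    rwa [gt_iff_lt, div_lt_iff₀ hD] at hp
  nlinarith
end
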